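/- (Convex combinations of two-orientation truncations dominate matrix truncation.) Let A be an m×p×n complex tensor and let 𝐀 : Matrix (Fin m × Fin n) (Fin p) ℂ be its unfolding, 𝐀 (a,i) j = (A i) a j. Let M = c • W₁ with c ≠ 0, W₁ ∈ Matrix.unitaryGroup (Fin n) ℂ, and N = d • W₂ with d ≠ 0, W₂ ∈ Matrix.unitaryGroup (Fin m) ℂ. Suppose A = U ⋆_M S ⋆_M Vᴴ is a t-SVDM of A under ⋆_M with t-rank-k₁ truncation A_{k₁}, and Aᴾ = U' ⋆_N S' ⋆_N (V')ᴴ is a t-SVDM of the permuted tensor Aᴾ under ⋆_N with t-rank-k₂ truncation (Aᴾ)_{k₂}. Then for every α ∈ [0,1] and every matrix B : Matrix (Fin m × Fin n) (Fin p) ℂ with rank B ≤ min(k₁,k₂), ‖A − (α • A_{k₁} + (1−α) • ((Aᴾ)_{k₂})ᴾ)‖_F ≤ ‖𝐀 − B‖_F, where scalar multiples and sums of tensors are taken slicewise and the right-hand norm is the matrix Frobenius norm. -/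

import Mathlib

open scoped BigOperators ComplexConjugate Matrix

noncomputable section

variable {R : Type*}

/-- Mode-3 product of a third-order tensor (encoded by its frontal slices)
with a transform matrix: `(A ×₃ M) i = ∑ j, (M i j) • (A j)`. -/
def mode3 [RCLike R] {ι α β : Type*} [Fintype ι]
    (A : ι → Matrix α β R) (M : Matrix ι ι R) : ι → Matrix α β R :=
  fun i => ∑ j, M i j • A j

/-- Frobenius (entrywise ℓ²) norm of a matrix. -/
def fnorm [RCLike R] {α β : Type*} [Fintype α] [Fintype β] (A : Matrix α β R) : ℝ :=
  Real.sqrt (∑ a, ∑ b, ‖A a b‖ ^ 2)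

/-- Frobenius norm of a tensor: `‖A‖² = ∑ i, ‖A i‖²`. -/
def tnorm [RCLike R] {ι α β : Type*} [Fintype ι] [Fintype α] [Fintype β]
    (A : ι → Matrix α β R) : ℝ :=
  Real.sqrt (∑ i, fnorm (A i) ^ 2)

/-- The ⋆_M product: facewise product in the transform domain, then inverse transform. -/
def tprodM [RCLike R] {ι m p q : Type*} [Fintype ι] [DecidableEq ι] [Fintype p]
    (M : Matrix ι ι R) (A : ι → Matrix m p R) (B : ι → Matrix p q R) :
    ι → Matrix m q R :=
  mode3 (fun i => mode3 A M i * mode3 B M i) M⁻¹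

/-- Conjugate transpose of a tensor under ⋆_M. -/
def tconj [RCLike R] {ι m p : Type*} [Fintype ι] [DecidableEq ι]
    (M : Matrix ι ι R) (A : ι → Matrix m p R) : ι → Matrix p m R :=
  mode3 (fun i => (mode3 A M i)ᴴ) M⁻¹

/-- The identity tensor under ⋆_M. -/
def tId [RCLike R] (m : Type*) [DecidableEq m] {ι : Type*} [Fintype ι] [DecidableEq ι]
    (M : Matrix ι ι R) : ι → Matrix m m R :=
  mode3 (fun _ => (1 : Matrix m m R)) M⁻¹

/-- A square tensor `Q` is ⋆_M-unitary if `Qᴴ ⋆_M Q = Q ⋆_M Qᴴ = I`. -/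
def tUnitary [RCLike R] {ι m : Type*} [Fintype ι] [DecidableEq ι] [Fintype m] [DecidableEq m]
    (M : Matrix ι ι R) (Q : ι → Matrix m m R) : Prop :=
  tprodM M (tconj M Q) Q = tId m M ∧ tprodM M Q (tconj M Q) = tId m M

/-- A t-SVDM of `A`: a factorization `A = U ⋆_M S ⋆_M Vᴴ` with `U`, `V` ⋆_M-unitary and every
transform-domain slice `Ŝ i` diagonal with real, nonnegative, nonincreasing diagonal entries. -/
def IsTSVDM [RCLike R] {m p n : ℕ} (M : Matrix (Fin n) (Fin n) R)
    (A : Fin n → Matrix (Fin m) (Fin p) R)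
    (U : Fin n → Matrix (Fin m) (Fin m) R)
    (S : Fin n → Matrix (Fin m) (Fin p) R)
    (V : Fin n → Matrix (Fin p) (Fin p) R) : Prop :=
  A = tprodM M (tprodM M U S) (tconj M V) ∧
  tUnitary M U ∧ tUnitary M V ∧
  (∀ (i : Fin n) (a : Fin m) (b : Fin p), (a : ℕ) ≠ (b : ℕ) → mode3 S M i a b = 0) ∧
  (∀ (i : Fin n) (a : Fin m) (b : Fin p), (a : ℕ) = (b : ℕ) →
      ∃ r : ℝ, 0 ≤ r ∧ mode3 S M i a b = (r : R)) ∧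
  (∀ (i : Fin n) (a a' : Fin m) (b b' : Fin p), (a : ℕ) = (b : ℕ) → (a' : ℕ) = (b' : ℕ) →
      (a : ℕ) ≤ (a' : ℕ) →
      RCLike.re (mode3 S M i a' b') ≤ RCLike.re (mode3 S M i a b))

/-- Transform-domain slice of a truncation:
(first k columns of Û) * (leading k×k block of Ŝ) * (first k columns of V̂)ᴴ. -/
def truncSlice [RCLike R] {m p : ℕ} (k : ℕ) (Uh : Matrix (Fin m) (Fin m) R)
    (Sh : Matrix (Fin m) (Fin p) R) (Vh : Matrix (Fin p) (Fin p) R) :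
    Matrix (Fin m) (Fin p) R :=
  Matrix.of fun a b =>
    ∑ j : Fin m, ∑ l : Fin p,
      if (j : ℕ) < k ∧ (l : ℕ) < k then Uh a j * Sh j l * star (Vh b l) else 0

/-- The multi-rank-ρ truncation of a t-SVDM (use `ρ = fun _ => k` for the t-rank-k truncation). -/
def truncTensor [RCLike R] {m p n : ℕ} (M : Matrix (Fin n) (Fin n) R)
    (U : Fin n → Matrix (Fin m) (Fin m) R) (S : Fin n → Matrix (Fin m) (Fin p) R)
    (V : Fin n → Matrix (Fin p) (Fin p) R) (ρ : Fin n → ℕ) :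
    Fin n → Matrix (Fin m) (Fin p) R :=
  mode3 (fun i => truncSlice (ρ i) (mode3 U M i) (mode3 S M i) (mode3 V M i)) M⁻¹

/-- The permuted tensor `Aᴾ`: `(Aᴾ c) i j = (A i) c j`. -/
def tperm [RCLike R] {m p n : ℕ} (A : Fin n → Matrix (Fin m) (Fin p) R) :
    Fin m → Matrix (Fin n) (Fin p) R :=
  fun c => Matrix.of fun i j => A i c j

/-!
If `M = c • W` with `W` unitary then `Mᴴ * M = ‖c‖² • 1`, so the mode-3 transform multiplies the
tensor Frobenius norm by `‖c‖`; applied to the unfolding, blockwise along the tube index, it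
multiplies the matrix Frobenius norm by the same factor. In the transform domain the t-rank-k
truncation error of slice `i` is the tail `∑_{j ≥ k} σ_j²` of the singular values of `Â i`, while
slice `i` of the transformed `B` still has rank at most `rank B ≤ k`. Eckart–Young for each slice
therefore gives `‖A - A_k‖ ≤ ‖𝐀 - B‖`. Eckart–Young itself follows by testing `S - C` on an
orthonormal basis of `ker C`, which has dimension at least `p - k`, and applying Bessel's
inequality. The unfolding of `Aᴾ` is a row permutation of `𝐀`, so the same bound holds for the
second orientation, and the convex combination is handled by the triangle inequality.
-/

open Matrix

section Frobenius

variable {𝕜 ι κ : Type*} [RCLike 𝕜] [Fintype ι] [Fintype κ]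

lemma fnorm_nonneg (X : Matrix ι κ 𝕜) : 0 ≤ fnorm X := Real.sqrt_nonneg _

lemma fnorm_sq (X : Matrix ι κ 𝕜) : fnorm X ^ 2 = ∑ a, ∑ b, ‖X a b‖ ^ 2 :=
  Real.sq_sqrt (by positivity)

lemma fnorm_conjTranspose (X : Matrix ι κ 𝕜) : fnorm Xᴴ = fnorm X := by
  unfold fnorm
  rw [Finset.sum_comm]
  simp [conjTranspose_apply]

lemma fnorm_submatrix_equiv {ι' κ' : Type*} [Fintype ι'] [Fintype κ'] (X : Matrix ι κ 𝕜)
    (e : ι' ≃ ι) (f : κ' ≃ κ) : fnorm (X.submatrix e f) = fnorm X := by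
  unfold fnorm
  congr 1
  exact Fintype.sum_equiv e _ _ fun a => Fintype.sum_equiv f _ _ fun b => rfl

lemma sum_norm_sq_eq_star_dotProduct (v : ι → 𝕜) :
    ((∑ a, ‖v a‖ ^ 2 : ℝ) : 𝕜) = star v ⬝ᵥ v := by
  simp [dotProduct, RCLike.conj_mul]

lemma sum_norm_mulVec_sq [DecidableEq κ] {M : Matrix ι κ 𝕜} {g : κ → ℝ}
    (hM : Mᴴ * M = diagonal fun j => (g j : 𝕜)) (x : κ → 𝕜) :
    ∑ a, ‖(M *ᵥ x) a‖ ^ 2 = ∑ j, g j * ‖x j‖ ^ 2 := by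
  apply RCLike.ofReal_injective (K := 𝕜)
  rw [sum_norm_sq_eq_star_dotProduct, star_mulVec, ← dotProduct_mulVec, mulVec_mulVec, hM]
  simp [dotProduct, mulVec_diagonal, ← RCLike.conj_mul, mul_left_comm]

lemma fnorm_unitary_mul [DecidableEq ι] {U : Matrix ι ι 𝕜} (hU : U ∈ unitaryGroup ι 𝕜)
    (X : Matrix ι κ 𝕜) : fnorm (U * X) = fnorm X := by
  have hUU : Uᴴ * U = diagonal fun _ => ((1 : ℝ) : 𝕜) := by
    rw [RCLike.ofReal_one, diagonal_one, ← star_eq_conjTranspose, ← mem_unitaryGroup_iff']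
    exact hU
  rw [← sq_eq_sq₀ (fnorm_nonneg _) (fnorm_nonneg _), fnorm_sq, fnorm_sq, Finset.sum_comm,
    Finset.sum_comm (f := fun a b => ‖X a b‖ ^ 2)]
  refine Finset.sum_congr rfl fun b _ => ?_
  simpa [mul_apply, mulVec, dotProduct] using sum_norm_mulVec_sq hUU (fun a => X a b)

lemma fnorm_unitary_mul_mul_conjTranspose [DecidableEq ι] [DecidableEq κ]
    {U : Matrix ι ι 𝕜} {V : Matrix κ κ 𝕜} (hU : U ∈ unitaryGroup ι 𝕜)
    (hV : V ∈ unitaryGroup κ 𝕜) (X : Matrix ι κ 𝕜) : fnorm (U * X * Vᴴ) = fnorm X := by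
  have hright (Y : Matrix ι κ 𝕜) : fnorm (Y * Vᴴ) = fnorm Y := by
    rw [← fnorm_conjTranspose, conjTranspose_mul, conjTranspose_conjTranspose,
      fnorm_unitary_mul hV, fnorm_conjTranspose]
  rw [hright, fnorm_unitary_mul hU]

end Frobenius

section FrobeniusTriangle

attribute [local instance] Matrix.frobeniusNormedAddCommGroup Matrix.frobeniusNormedSpace

variable {𝕜 ι κ : Type*} [RCLike 𝕜] [Fintype ι] [Fintype κ]

lemma fnorm_eq_frobenius_norm (X : Matrix ι κ 𝕜) : fnorm X = ‖X‖ := by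
  rw [frobenius_norm_def, fnorm, Real.sqrt_eq_rpow]
  norm_cast

lemma fnorm_add_le (X Y : Matrix ι κ 𝕜) : fnorm (X + Y) ≤ fnorm X + fnorm Y := by
  simp only [fnorm_eq_frobenius_norm]
  exact norm_add_le X Y

lemma fnorm_smul (a : ℝ) (X : Matrix ι κ 𝕜) : fnorm (a • X) = |a| * fnorm X := by
  simp only [fnorm_eq_frobenius_norm, norm_smul, Real.norm_eq_abs]

end FrobeniusTriangle

section Unfolding

variable {𝕜 ι α β : Type*}

def tunfold (X : ι → Matrix α β 𝕜) : Matrix (α × ι) β 𝕜 :=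
  Matrix.of fun ai j => X ai.2 ai.1 j

def tfold (B : Matrix (α × ι) β 𝕜) : ι → Matrix α β 𝕜 :=
  fun i => B.submatrix (·, i) id

@[simp]
lemma tunfold_tfold (B : Matrix (α × ι) β 𝕜) : tunfold (tfold B) = B := rfl

@[simp]
lemma tunfold_sub [Sub 𝕜] (X Y : ι → Matrix α β 𝕜) : tunfold (X - Y) = tunfold X - tunfold Y := rfl

variable [RCLike 𝕜] [Fintype ι] [Fintype α] [Fintype β]

lemma tnorm_nonneg (X : ι → Matrix α β 𝕜) : 0 ≤ tnorm X := Real.sqrt_nonneg _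

lemma tnorm_sq (X : ι → Matrix α β 𝕜) : tnorm X ^ 2 = ∑ i, fnorm (X i) ^ 2 :=
  Real.sq_sqrt (by positivity)

lemma tnorm_eq_fnorm_tunfold (X : ι → Matrix α β 𝕜) : tnorm X = fnorm (tunfold X) := by
  rw [tnorm, fnorm]
  simp only [fnorm_sq]
  rw [Fintype.sum_prod_type, Finset.sum_comm]
  rfl

lemma tnorm_sub_convex_comb_le (A X Y : ι → Matrix α β 𝕜) {a : ℝ} (ha0 : 0 ≤ a) (ha1 : a ≤ 1) :
    tnorm (fun i => A i - (a • X i + (1 - a) • Y i)) ≤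
      a * tnorm (A - X) + (1 - a) * tnorm (A - Y) := by
  have hcomb : (fun i => A i - (a • X i + (1 - a) • Y i)) = a • (A - X) + (1 - a) • (A - Y) := by
    funext i
    simp only [Pi.add_apply, Pi.smul_apply, Pi.sub_apply]
    module
  rw [hcomb, tnorm_eq_fnorm_tunfold, tnorm_eq_fnorm_tunfold, tnorm_eq_fnorm_tunfold]
  show fnorm (a • tunfold (A - X) + (1 - a) • tunfold (A - Y)) ≤ _
  refine (fnorm_add_le _ _).trans_eq ?_
  rw [fnorm_smul, fnorm_smul, abs_of_nonneg ha0, abs_of_nonneg (sub_nonneg.2 ha1)]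

lemma tnorm_le_tnorm {X Y : ι → Matrix α β 𝕜} (h : ∀ i, fnorm (X i) ≤ fnorm (Y i)) :
    tnorm X ≤ tnorm Y :=
  Real.sqrt_le_sqrt <| Finset.sum_le_sum fun i _ => pow_le_pow_left₀ (fnorm_nonneg _) (h i) 2

end Unfolding

section Permutation

variable {𝕜 : Type*} [RCLike 𝕜] {m p n : ℕ}

lemma tunfold_tperm (X : Fin n → Matrix (Fin m) (Fin p) 𝕜) :
    tunfold (tperm X) = (tunfold X).submatrix (Equiv.prodComm _ _) (Equiv.refl _) := rfl

lemma tnorm_tperm (X : Fin n → Matrix (Fin m) (Fin p) 𝕜) : tnorm (tperm X) = tnorm X := by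
  rw [tnorm_eq_fnorm_tunfold, tunfold_tperm, fnorm_submatrix_equiv, tnorm_eq_fnorm_tunfold]

lemma fnorm_tunfold_tperm_sub (X : Fin n → Matrix (Fin m) (Fin p) 𝕜)
    (B : Matrix (Fin m × Fin n) (Fin p) 𝕜) :
    fnorm (tunfold (tperm X) - B.submatrix (Equiv.prodComm _ _) (Equiv.refl _)) =
      fnorm (tunfold X - B) := by
  rw [tunfold_tperm, ← fnorm_submatrix_equiv (tunfold X - B) (Equiv.prodComm _ _) (Equiv.refl _)]
  rfl

lemma sub_tperm (X : Fin n → Matrix (Fin m) (Fin p) 𝕜) (Y : Fin m → Matrix (Fin n) (Fin p) 𝕜) :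
    X - tperm Y = tperm (tperm X - Y) := rfl

end Permutation

section Mode3

variable {𝕜 ι α β : Type*} [RCLike 𝕜] [Fintype ι]

lemma mode3_apply (X : ι → Matrix α β 𝕜) (M : Matrix ι ι 𝕜) (i : ι) (a : α) (b : β) :
    mode3 X M i a b = ∑ j, M i j * X j a b := by
  simp [mode3, Matrix.sum_apply]

lemma mode3_sub (X Y : ι → Matrix α β 𝕜) (M : Matrix ι ι 𝕜) :
    mode3 (X - Y) M = mode3 X M - mode3 Y M := by
  funext i
  simp [mode3, smul_sub]

lemma mode3_mode3 (X : ι → Matrix α β 𝕜) (M N : Matrix ι ι 𝕜) :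
    mode3 (mode3 X M) N = mode3 X (N * M) := by
  funext i
  ext a b
  simp only [mode3_apply, Matrix.mul_apply, Finset.mul_sum, Finset.sum_mul]
  rw [Finset.sum_comm]
  exact Finset.sum_congr rfl fun l _ => Finset.sum_congr rfl fun j _ => by ring

lemma mode3_one [DecidableEq ι] (X : ι → Matrix α β 𝕜) : mode3 X 1 = X := by
  funext i
  ext a b
  simp [mode3_apply, Matrix.one_apply]

lemma mode3_mode3_inv [DecidableEq ι] {M : Matrix ι ι 𝕜} (hM : IsUnit M.det)
    (X : ι → Matrix α β 𝕜) : mode3 (mode3 X M⁻¹) M = X := by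
  rw [mode3_mode3, mul_nonsing_inv M hM, mode3_one]

variable [Fintype α] [Fintype β]

lemma tnorm_mode3 [DecidableEq ι] {M : Matrix ι ι 𝕜} {r : ℝ} (hr : 0 ≤ r)
    (hM : Mᴴ * M = (r : 𝕜) • 1) (X : ι → Matrix α β 𝕜) : tnorm (mode3 X M) = √r * tnorm X := by
  have hdiag : Mᴴ * M = diagonal fun _ => (r : 𝕜) := by rw [hM, smul_one_eq_diagonal]
  have hsq : tnorm (mode3 X M) ^ 2 = r * tnorm X ^ 2 := by
    simp only [tnorm_sq, fnorm_sq, Finset.mul_sum]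
    rw [Finset.sum_comm, Finset.sum_comm (γ := ι)]
    refine Finset.sum_congr rfl fun a _ => ?_
    rw [Finset.sum_comm, Finset.sum_comm (γ := ι)]
    refine Finset.sum_congr rfl fun b _ => ?_
    simpa [mode3_apply, mulVec, dotProduct] using sum_norm_mulVec_sq hdiag (fun j => X j a b)
  rw [← Real.sqrt_sq (tnorm_nonneg _), hsq, Real.sqrt_mul hr, Real.sqrt_sq (tnorm_nonneg _)]

lemma rank_mode3_tfold_le (B : Matrix (α × ι) β 𝕜) (M : Matrix ι ι 𝕜) (i : ι) :
    (mode3 (tfold B) M i).rank ≤ B.rank := by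
  classical
  have hmul : mode3 (tfold B) M i =
      (Matrix.of fun a (x : α × ι) => if x.1 = a then M i x.2 else 0) * B := by
    ext a b
    simp [mode3_apply, Matrix.mul_apply, tfold, Fintype.sum_prod_type]
  rw [hmul]
  exact rank_mul_le_right _ _

end Mode3

section TransformDomain

variable {𝕜 ι α β γ : Type*} [RCLike 𝕜] [Fintype ι] [DecidableEq ι] {M : Matrix ι ι 𝕜}

lemma mode3_tprodM [Fintype β] (hM : IsUnit M.det) (X : ι → Matrix α β 𝕜)
    (Y : ι → Matrix β γ 𝕜) (i : ι) : mode3 (tprodM M X Y) M i = mode3 X M i * mode3 Y M i := by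
  rw [tprodM, mode3_mode3_inv hM]

lemma mode3_tconj (hM : IsUnit M.det) (X : ι → Matrix α β 𝕜) (i : ι) :
    mode3 (tconj M X) M i = (mode3 X M i)ᴴ := by
  rw [tconj, mode3_mode3_inv hM]

lemma mode3_tId [DecidableEq α] (hM : IsUnit M.det) (i : ι) : mode3 (tId α M) M i = 1 := by
  rw [tId, mode3_mode3_inv hM]

lemma tUnitary.mode3_mem_unitaryGroup [Fintype α] [DecidableEq α] (hM : IsUnit M.det)
    {Q : ι → Matrix α α 𝕜} (hQ : tUnitary M Q) (i : ι) : mode3 Q M i ∈ unitaryGroup α 𝕜 := by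
  rw [mem_unitaryGroup_iff', star_eq_conjTranspose, ← mode3_tconj hM, ← mode3_tprodM hM, hQ.1,
    mode3_tId hM]

lemma mode3_truncTensor {m p n : ℕ} {M : Matrix (Fin n) (Fin n) 𝕜} (hM : IsUnit M.det)
    (U : Fin n → Matrix (Fin m) (Fin m) 𝕜) (S : Fin n → Matrix (Fin m) (Fin p) 𝕜)
    (V : Fin n → Matrix (Fin p) (Fin p) 𝕜) (ρ : Fin n → ℕ) (i : Fin n) :
    mode3 (truncTensor M U S V ρ) M i =
      truncSlice (ρ i) (mode3 U M i) (mode3 S M i) (mode3 V M i) := by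
  rw [truncTensor, mode3_mode3_inv hM]

lemma IsTSVDM.mode3_eq {m p n : ℕ} {M : Matrix (Fin n) (Fin n) 𝕜} (hM : IsUnit M.det)
    {A : Fin n → Matrix (Fin m) (Fin p) 𝕜} {U : Fin n → Matrix (Fin m) (Fin m) 𝕜}
    {S : Fin n → Matrix (Fin m) (Fin p) 𝕜} {V : Fin n → Matrix (Fin p) (Fin p) 𝕜}
    (h : IsTSVDM M A U S V) (i : Fin n) :
    mode3 A M i = mode3 U M i * mode3 S M i * (mode3 V M i)ᴴ := by
  rw [h.1, mode3_tprodM hM, mode3_tprodM hM, mode3_tconj hM]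

end TransformDomain

section RectangularDiagonal

variable {𝕜 : Type*} [RCLike 𝕜] {m p : ℕ}

variable (𝕜) in
def rectDiag (m p : ℕ) (σ : ℕ → ℝ) : Matrix (Fin m) (Fin p) 𝕜 :=
  Matrix.of fun a b => if (a : ℕ) = b then (σ a : 𝕜) else 0

lemma exists_eq_rectDiag (S : Matrix (Fin m) (Fin p) 𝕜)
    (hoff : ∀ (a : Fin m) (b : Fin p), (a : ℕ) ≠ (b : ℕ) → S a b = 0)
    (hdiag : ∀ (a : Fin m) (b : Fin p), (a : ℕ) = (b : ℕ) → ∃ r : ℝ, 0 ≤ r ∧ S a b = (r : 𝕜))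
    (hmono : ∀ (a a' : Fin m) (b b' : Fin p), (a : ℕ) = (b : ℕ) → (a' : ℕ) = (b' : ℕ) →
      (a : ℕ) ≤ (a' : ℕ) → RCLike.re (S a' b') ≤ RCLike.re (S a b)) :
    ∃ σ : ℕ → ℝ, Antitone σ ∧ 0 ≤ σ ∧ S = rectDiag 𝕜 m p σ := by
  set σ : ℕ → ℝ := fun x => if h : x < m ∧ x < p then RCLike.re (S ⟨x, h.1⟩ ⟨x, h.2⟩) else 0
  have hσ0 : 0 ≤ σ := by
    intro x
    simp only [σ, Pi.zero_apply]
    split_ifs with h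
    · obtain ⟨r, hr, hS⟩ := hdiag ⟨x, h.1⟩ ⟨x, h.2⟩ rfl
      simpa [hS] using hr
    · rfl
  refine ⟨σ, fun x y hxy => ?_, hσ0, ?_⟩
  · by_cases hy : y < m ∧ y < p
    · have hx : x < m ∧ x < p := ⟨hxy.trans_lt hy.1, hxy.trans_lt hy.2⟩
      simpa [σ, hx, hy] using hmono ⟨x, hx.1⟩ ⟨y, hy.1⟩ ⟨x, hx.2⟩ ⟨y, hy.2⟩ rfl rfl hxy
    · simpa [σ, hy] using hσ0 x
  · ext a b
    by_cases hab : (a : ℕ) = b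
    · obtain ⟨r, -, hS⟩ := hdiag a b hab
      simp [rectDiag, σ, hab, hS]
    · simp [rectDiag, hab, hoff a b hab]

lemma rectDiag_sub (σ τ : ℕ → ℝ) :
    rectDiag 𝕜 m p σ - rectDiag 𝕜 m p τ = rectDiag 𝕜 m p (σ - τ) := by
  ext a b
  by_cases hab : (a : ℕ) = b <;> simp [rectDiag, hab]

lemma conjTranspose_rectDiag_mul_self (σ : ℕ → ℝ) :
    (rectDiag 𝕜 m p σ)ᴴ * rectDiag 𝕜 m p σ =
      diagonal fun j : Fin p => (((if (j : ℕ) < m then σ j ^ 2 else 0 : ℝ)) : 𝕜) := by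
  ext j l
  simp only [mul_apply, conjTranspose_apply, rectDiag, of_apply, diagonal_apply]
  rw [Fin.sum_univ_eq_sum_range
    (fun x => star (if x = (j : ℕ) then (σ x : 𝕜) else 0) * if x = (l : ℕ) then (σ x : 𝕜) else 0)]
  by_cases hjl : j = l
  · subst hjl
    by_cases h : (j : ℕ) < m <;> simp [← pow_two, h]
  · simp [hjl, (Fin.val_ne_of_ne hjl).symm]

lemma truncSlice_rectDiag (k : ℕ) (U : Matrix (Fin m) (Fin m) 𝕜) (σ : ℕ → ℝ)
    (V : Matrix (Fin p) (Fin p) 𝕜) :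
    truncSlice k U (rectDiag 𝕜 m p σ) V =
      U * rectDiag 𝕜 m p (fun x => if x < k then σ x else 0) * Vᴴ := by
  ext a b
  simp only [truncSlice, Matrix.mul_apply, Matrix.of_apply, Matrix.conjTranspose_apply,
    Finset.sum_mul]
  rw [Finset.sum_comm]
  refine Finset.sum_congr rfl fun l _ => Finset.sum_congr rfl fun j _ => ?_
  by_cases hjl : (j : ℕ) = l
  · by_cases hl : (l : ℕ) < k <;> simp [rectDiag, hjl, hl]
  · simp [rectDiag, hjl]

end RectangularDiagonal

section EckartYoung

variable {𝕜 ι κ : Type*} [RCLike 𝕜] [Fintype ι] [Fintype κ]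

lemma sum_norm_sq_col_eq [DecidableEq κ] {X : Matrix ι κ 𝕜} {g : κ → ℝ}
    (hX : Xᴴ * X = diagonal fun j => (g j : 𝕜)) (j : κ) :
    ∑ a, ‖X a j‖ ^ 2 = g j := by
  simpa [Pi.single_apply, apply_ite (fun x : 𝕜 => ‖x‖ ^ 2)] using
    sum_norm_mulVec_sq hX (Pi.single j 1)

lemma fnorm_sq_eq_sum_of_conjTranspose_mul_self [DecidableEq κ] {X : Matrix ι κ 𝕜} {g : κ → ℝ}
    (hX : Xᴴ * X = diagonal fun j => (g j : 𝕜)) :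
    fnorm X ^ 2 = ∑ j, g j := by
  rw [fnorm_sq, Finset.sum_comm]
  exact Finset.sum_congr rfl fun j _ => sum_norm_sq_col_eq hX j

lemma sum_tail_le_sum_mul_of_antitone {p k : ℕ} {g t : Fin p → ℝ} (hg : Antitone g)
    (hg0 : 0 ≤ g) (ht0 : 0 ≤ t) (ht1 : t ≤ 1) (ht : (p : ℝ) ≤ ∑ j, t j + k) :
    ∑ j : Fin p, (if k ≤ (j : ℕ) then g j else 0) ≤ ∑ j, g j * t j := by
  rcases lt_or_ge k p with hk | hk
  · -- Compare termwise with the threshold `c = g k`: a term below `k` gains at least `c * t j`,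
    -- and a term from `k` on loses at most `c * (1 - t j)`.
    set c := g ⟨k, hk⟩
    have hpt (j : Fin p) : c * (t j - 1 + if (j : ℕ) < k then 1 else 0) ≤
        g j * t j - if k ≤ (j : ℕ) then g j else 0 := by
      by_cases hj : (j : ℕ) < k
      · have : c ≤ g j := hg (show j ≤ ⟨k, hk⟩ from Fin.le_def.2 hj.le)
        simp only [hj, if_true, not_le.mpr hj, if_false]
        nlinarith [mul_le_mul_of_nonneg_right this (ht0 j)]
      · have : g j ≤ c := hg (show ⟨k, hk⟩ ≤ j from Fin.le_def.2 (not_lt.mp hj))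
        simp only [hj, if_false, not_lt.mp hj, if_true]
        nlinarith [mul_nonneg (sub_nonneg.2 this) (sub_nonneg.2 (show t j ≤ 1 from ht1 j))]
    have hcount : ∑ j : Fin p, (if (j : ℕ) < k then (1 : ℝ) else 0) = k := by
      rw [Finset.sum_boole, Fin.card_filter_val_lt, min_eq_right hk.le]
    have hsum := Finset.sum_le_sum fun j (_ : j ∈ Finset.univ) => hpt j
    rw [← Finset.mul_sum, Finset.sum_add_distrib, Finset.sum_sub_distrib, hcount,
      Finset.sum_sub_distrib] at hsum
    simp only [Finset.sum_const, Finset.card_univ, Fintype.card_fin, nsmul_eq_mul, mul_one] at hsum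
    nlinarith [mul_nonneg (hg0 ⟨k, hk⟩) (by linarith : (0 : ℝ) ≤ ∑ j, t j - p + k)]
  · rw [Finset.sum_eq_zero fun j _ => if_neg (not_le.mpr (j.2.trans_le hk))]
    exact Finset.sum_nonneg fun j _ => mul_nonneg (hg0 j) (ht0 j)

lemma Matrix.exists_orthonormal_mulVec_eq_zero [DecidableEq κ] (C : Matrix ι κ 𝕜) :
    ∃ (r : ℕ) (v : Fin r → EuclideanSpace 𝕜 κ), Orthonormal 𝕜 v ∧
      (∀ i, C *ᵥ (v i).ofLp = 0) ∧ r + C.rank = Fintype.card κ := by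
  set K := LinearMap.ker (toEuclideanLin C)
  set b := stdOrthonormalBasis 𝕜 K
  refine ⟨_, fun i => K.subtypeₗᵢ (b i), b.orthonormal.comp_linearIsometry K.subtypeₗᵢ,
    fun i => ?_, ?_⟩
  · exact congrArg WithLp.ofLp (LinearMap.mem_ker.mp (b i).2)
  · rw [rank_eq_finrank_range_toLin C (PiLp.basisFun 2 𝕜 ι) (PiLp.basisFun 2 𝕜 κ), add_comm]
    exact (LinearMap.finrank_range_add_finrank_ker (toEuclideanLin C)).trans
      finrank_euclideanSpace

lemma Orthonormal.sum_norm_apply_sq_le_one [DecidableEq κ] {v : ι → EuclideanSpace 𝕜 κ}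
    (hv : Orthonormal 𝕜 v) (j : κ) : ∑ i, ‖v i j‖ ^ 2 ≤ 1 := by
  simpa [EuclideanSpace.inner_single_right] using
    hv.sum_inner_products_le (EuclideanSpace.single j (1 : 𝕜)) (s := Finset.univ)

lemma Orthonormal.sum_norm_mulVec_sq_le {α : Type*} [Fintype α] {v : ι → EuclideanSpace 𝕜 κ}
    (hv : Orthonormal 𝕜 v) (X : Matrix α κ 𝕜) :
    ∑ i, ∑ a, ‖(X *ᵥ (v i).ofLp) a‖ ^ 2 ≤ fnorm X ^ 2 := by
  set row : α → EuclideanSpace 𝕜 κ := fun a => WithLp.toLp 2 (star (X a))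
  have hrow (a : α) (i : ι) : (X *ᵥ (v i).ofLp) a = inner 𝕜 (row a) (v i) := by
    simp [row, PiLp.inner_apply, mulVec, dotProduct, mul_comm]
  rw [Finset.sum_comm, fnorm_sq]
  refine Finset.sum_le_sum fun a _ => ?_
  have hbessel := hv.sum_inner_products_le (row a) (s := Finset.univ)
  simp only [norm_inner_symm (v _)] at hbessel
  simpa [hrow, row, EuclideanSpace.norm_sq_eq] using hbessel

theorem sum_tail_le_fnorm_sub_sq {p k : ℕ} {S C : Matrix ι (Fin p) 𝕜} {g : Fin p → ℝ}
    (hS : Sᴴ * S = diagonal fun j => (g j : 𝕜)) (hg : Antitone g) (hC : C.rank ≤ k) :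
    ∑ j : Fin p, (if k ≤ (j : ℕ) then g j else 0) ≤ fnorm (S - C) ^ 2 := by
  obtain ⟨r, v, hv, hker, hdim⟩ := C.exists_orthonormal_mulVec_eq_zero
  -- `t j = ‖P e_j‖²` for the orthogonal projection `P` onto `ker C`.
  set t : Fin p → ℝ := fun j => ∑ i, ‖v i j‖ ^ 2
  have ht : ∑ j, t j = r := by
    rw [Finset.sum_comm]
    simp [← EuclideanSpace.norm_sq_eq, hv.1]
  have hrank : (p : ℝ) ≤ ∑ j, t j + k := by
    rw [Fintype.card_fin] at hdim
    rw [ht]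
    exact_mod_cast (show p ≤ r + k by omega)
  calc ∑ j : Fin p, (if k ≤ (j : ℕ) then g j else 0)
      ≤ ∑ j, g j * t j :=
        sum_tail_le_sum_mul_of_antitone hg (fun j => (sum_norm_sq_col_eq hS j) ▸ by positivity)
          (fun j => by positivity) hv.sum_norm_apply_sq_le_one hrank
    _ = ∑ i, ∑ a, ‖(S *ᵥ (v i).ofLp) a‖ ^ 2 := by
        simp only [sum_norm_mulVec_sq hS, t, Finset.mul_sum]
        exact Finset.sum_comm
    _ = ∑ i, ∑ a, ‖((S - C) *ᵥ (v i).ofLp) a‖ ^ 2 := by simp [sub_mulVec, hker]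
    _ ≤ fnorm (S - C) ^ 2 := hv.sum_norm_mulVec_sq_le _

end EckartYoung

section Truncation

variable {𝕜 : Type*} [RCLike 𝕜]

theorem fnorm_sub_truncSlice_le {m p k : ℕ} {U : Matrix (Fin m) (Fin m) 𝕜}
    {V : Matrix (Fin p) (Fin p) 𝕜} (hU : U ∈ unitaryGroup (Fin m) 𝕜)
    (hV : V ∈ unitaryGroup (Fin p) 𝕜) {σ : ℕ → ℝ} (hσ : Antitone σ) (hσ0 : 0 ≤ σ)
    {C : Matrix (Fin m) (Fin p) 𝕜} (hC : C.rank ≤ k) :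
    fnorm (U * rectDiag 𝕜 m p σ * Vᴴ - truncSlice k U (rectDiag 𝕜 m p σ) V) ≤
      fnorm (U * rectDiag 𝕜 m p σ * Vᴴ - C) := by
  set g : Fin p → ℝ := fun j => if (j : ℕ) < m then σ j ^ 2 else 0
  have hg : Antitone g := by
    intro j l hjl
    by_cases hl : (l : ℕ) < m
    · simp only [g, hl, (Fin.le_def.1 hjl).trans_lt hl, if_true]
      exact pow_le_pow_left₀ (hσ0 _) (hσ (Fin.le_def.1 hjl)) 2
    · simp only [g, hl, if_false]
      split_ifs <;> positivity
  have hC' : U * (Uᴴ * C * V) * Vᴴ = C := by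
    rw [mem_unitaryGroup_iff, star_eq_conjTranspose] at hU hV
    simp only [← Matrix.mul_assoc, hU, Matrix.one_mul]
    rw [Matrix.mul_assoc, hV, Matrix.mul_one]
  have htail : rectDiag 𝕜 m p σ - rectDiag 𝕜 m p (fun x => if x < k then σ x else 0) =
      rectDiag 𝕜 m p (fun x => if x < k then 0 else σ x) := by
    rw [rectDiag_sub]
    congr 1
    funext x
    by_cases hx : x < k <;> simp [hx]
  rw [truncSlice_rectDiag, ← Matrix.sub_mul, ← Matrix.mul_sub, htail,
    fnorm_unitary_mul_mul_conjTranspose hU hV, ← hC', ← Matrix.sub_mul, ← Matrix.mul_sub,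
    fnorm_unitary_mul_mul_conjTranspose hU hV, ← sq_le_sq₀ (fnorm_nonneg _) (fnorm_nonneg _),
    fnorm_sq_eq_sum_of_conjTranspose_mul_self (conjTranspose_rectDiag_mul_self _)]
  calc ∑ j : Fin p, (if (j : ℕ) < m then (if (j : ℕ) < k then 0 else σ j) ^ 2 else 0)
      = ∑ j : Fin p, (if k ≤ (j : ℕ) then g j else 0) := by
        refine Finset.sum_congr rfl fun j _ => ?_
        by_cases hj : (j : ℕ) < k <;> simp [g, hj]
    _ ≤ fnorm (rectDiag 𝕜 m p σ - Uᴴ * C * V) ^ 2 :=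
        sum_tail_le_fnorm_sub_sq (conjTranspose_rectDiag_mul_self σ) hg
          (((rank_mul_le_left _ _).trans (rank_mul_le_right _ _)).trans hC)

lemma isUnit_det_of_conjTranspose_mul_self_eq {ι : Type*} [Fintype ι] [DecidableEq ι]
    {M : Matrix ι ι 𝕜} {r : ℝ} (hr : r ≠ 0) (hM : Mᴴ * M = (r : 𝕜) • 1) : IsUnit M.det :=
  isUnit_det_of_left_inverse (B := (r : 𝕜)⁻¹ • Mᴴ) (by
    rw [Matrix.smul_mul, hM, smul_smul, inv_mul_cancel₀ (by exact_mod_cast hr), one_smul])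

theorem tnorm_sub_truncTensor_le {m p n k : ℕ} {M : Matrix (Fin n) (Fin n) 𝕜} {r : ℝ}
    (hr : 0 < r) (hM : Mᴴ * M = (r : 𝕜) • 1) {A : Fin n → Matrix (Fin m) (Fin p) 𝕜}
    {U : Fin n → Matrix (Fin m) (Fin m) 𝕜} {S : Fin n → Matrix (Fin m) (Fin p) 𝕜}
    {V : Fin n → Matrix (Fin p) (Fin p) 𝕜} (h : IsTSVDM M A U S V)
    {B : Matrix (Fin m × Fin n) (Fin p) 𝕜} (hB : B.rank ≤ k) :
    tnorm (A - truncTensor M U S V (fun _ => k)) ≤ fnorm (tunfold A - B) := by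
  have hdet := isUnit_det_of_conjTranspose_mul_self_eq hr.ne' hM
  have hslice (i : Fin n) :
      fnorm (mode3 A M i - mode3 (truncTensor M U S V fun _ => k) M i) ≤
        fnorm (mode3 A M i - mode3 (tfold B) M i) := by
    rw [mode3_truncTensor hdet, h.mode3_eq hdet]
    obtain ⟨-, hU, hV, hoff, hdiag, hmono⟩ := h
    obtain ⟨σ, hσ, hσ0, hS⟩ := exists_eq_rectDiag _ (hoff i) (hdiag i) (hmono i)
    rw [hS]
    exact fnorm_sub_truncSlice_le (hU.mode3_mem_unitaryGroup hdet i)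
      (hV.mode3_mem_unitaryGroup hdet i) hσ hσ0 ((rank_mode3_tfold_le B M i).trans hB)
  have := tnorm_le_tnorm hslice
  rw [← Pi.sub_def, ← Pi.sub_def, ← mode3_sub, ← mode3_sub, tnorm_mode3 hr.le hM,
    tnorm_mode3 hr.le hM, tnorm_eq_fnorm_tunfold (A - tfold B), tunfold_sub, tunfold_tfold] at this
  exact le_of_mul_le_mul_left this (Real.sqrt_pos.2 hr)

end Truncation

lemma conjTranspose_smul_mul_smul_of_mem_unitaryGroup {𝕜 ι : Type*} [RCLike 𝕜] [Fintype ι]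
    [DecidableEq ι]    {W : Matrix ι ι 𝕜} (hW : W ∈ unitaryGroup ι 𝕜) (c : 𝕜) :
    (c • W)ᴴ * (c • W) = ((‖c‖ ^ 2 : ℝ) : 𝕜) • 1 := by
  rw [mem_unitaryGroup_iff', star_eq_conjTranspose] at hW
  rw [conjTranspose_smul, Matrix.smul_mul, Matrix.mul_smul, hW, smul_smul, RCLike.star_def,
    RCLike.conj_mul]
  norm_cast

/-- convex combinations of two-orientation truncations dominate matrix
truncation. -/
theorem stmt16 {m p n : ℕ}
    (A : Fin n → Matrix (Fin m) (Fin p) ℂ)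
    (W₁ : Matrix (Fin n) (Fin n) ℂ) (hW₁ : W₁ ∈ Matrix.unitaryGroup (Fin n) ℂ)
    (c : ℂ) (hc : c ≠ 0)
    (W₂ : Matrix (Fin m) (Fin m) ℂ) (hW₂ : W₂ ∈ Matrix.unitaryGroup (Fin m) ℂ)
    (d : ℂ) (hd : d ≠ 0)
    (U : Fin n → Matrix (Fin m) (Fin m) ℂ)
    (S : Fin n → Matrix (Fin m) (Fin p) ℂ)
    (V : Fin n → Matrix (Fin p) (Fin p) ℂ)
    (hsvd : IsTSVDM (c • W₁) A U S V)
    (U' : Fin m → Matrix (Fin n) (Fin n) ℂ)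
    (S' : Fin m → Matrix (Fin n) (Fin p) ℂ)
    (V' : Fin m → Matrix (Fin p) (Fin p) ℂ)
    (hsvd' : IsTSVDM (d • W₂) (tperm A) U' S' V')
    (k₁ k₂ : ℕ)
    (α : ℝ) (hα0 : 0 ≤ α) (hα1 : α ≤ 1)
    (B : Matrix (Fin m × Fin n) (Fin p) ℂ) (hB : Matrix.rank B ≤ min k₁ k₂) :
    tnorm (fun i => A i -
        (α • truncTensor (c • W₁) U S V (fun _ => k₁) i +
          (1 - α) • tperm (truncTensor (d • W₂) U' S' V' (fun _ => k₂)) i)) ≤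
      fnorm ((Matrix.of fun (ai : Fin m × Fin n) (j : Fin p) => A ai.2 ai.1 j) - B) := by
  set T₁ := truncTensor (c • W₁) U S V (fun _ => k₁)
  set T₂ := truncTensor (d • W₂) U' S' V' (fun _ => k₂)
  have hM₁ := conjTranspose_smul_mul_smul_of_mem_unitaryGroup hW₁ c
  have hM₂ := conjTranspose_smul_mul_smul_of_mem_unitaryGroup hW₂ d
  have h₁ : tnorm (A - T₁) ≤ fnorm (tunfold A - B) :=
    tnorm_sub_truncTensor_le (by positivity) hM₁ hsvd (hB.trans (min_le_left _ _))
  have h₂ : tnorm (A - tperm T₂) ≤ fnorm (tunfold A - B) := by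
    have := tnorm_sub_truncTensor_le (by positivity) hM₂ hsvd'
      (B := B.submatrix (Equiv.prodComm _ _) (Equiv.refl _))
      ((rank_submatrix _ _ _).trans_le (hB.trans (min_le_right _ _)))
    rwa [fnorm_tunfold_tperm_sub, ← tnorm_tperm, ← sub_tperm] at this
  have hα1' : 0 ≤ 1 - α := sub_nonneg.2 hα1
  calc _ ≤ α * tnorm (A - T₁) + (1 - α) * tnorm (A - tperm T₂) :=
        tnorm_sub_convex_comb_le A T₁ (tperm T₂) hα0 hα1
    _ ≤ α * fnorm (tunfold A - B) + (1 - α) * fnorm (tunfold A - B) := by gcongr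
    _ = fnorm (tunfold A - B) := by ring
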